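/- Let a, n ≥ 1. Let T be a tree which is 2^{a−1}·n-good from a string α, and let P_1, …, P_a be sets of strings such that T ⊆ P_1 ∪ … ∪ P_a. Then for some i with 1 ≤ i ≤ a, T has a subset which is n-good from α for P_i. -/

import Mathlib

/-!
Two sets: work upwards from the leaves. A leaf is a one-string good tree for whichever set
contains it; at an inner node with `2n` successors, each carrying an `n`-good subtree for `P` or
for `Q`, pigeonhole gives `n` successors whose subtrees are good for the same set, and the union
of those subtrees is `n`-good from the node. For `a` sets, split `P 0` off against the union of
the others; each split halves the goodness `2 ^ (a - 1) * n`.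
-/

def IsTree (T : Finset (List ℕ)) : Prop :=
  ∀ σ ∈ T, ∀ τ ∈ T, σ <+: τ → σ = τ

def GoodFrom (a : ℕ) (T : Finset (List ℕ)) (σ : List ℕ) : Prop :=
  T.Nonempty ∧ (∀ ρ ∈ T, σ <+: ρ) ∧
    ∀ τ : List ℕ, (∃ ρ ∈ T, σ <+: τ ∧ τ <+: ρ ∧ τ ≠ ρ) →
      a ≤ {k : ℕ | ∃ ρ ∈ T, τ ++ [k] <+: ρ}.ncard

def GoodFromFor (a : ℕ) (T : Finset (List ℕ)) (σ : List ℕ) (P : Set (List ℕ)) : Prop :=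
  GoodFrom a T σ ∧ ↑T ⊆ P

def successors (T : Finset (List ℕ)) (τ : List ℕ) : Set ℕ :=
  {k | ∃ ρ ∈ T, τ ++ [k] <+: ρ}

lemma successors_mono {S T : Finset (List ℕ)} (h : S ⊆ T) (τ : List ℕ) :
    successors S τ ⊆ successors T τ :=
  fun _ ⟨ρ, hρ, hk⟩ => ⟨ρ, h hρ, hk⟩

lemma successors_finite (T : Finset (List ℕ)) (τ : List ℕ) : (successors T τ).Finite :=
  (T.biUnion List.toFinset).finite_toSet.subset fun k ⟨ρ, hρ, hk⟩ => by
    simpa using ⟨ρ, hρ, hk.subset (by simp)⟩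

lemma GoodFrom.mono {a b : ℕ} {T : Finset (List ℕ)} {σ : List ℕ} (hab : a ≤ b)
    (h : GoodFrom b T σ) : GoodFrom a T σ :=
  ⟨h.1, h.2.1, fun τ hτ => hab.trans (h.2.2 τ hτ)⟩

lemma GoodFrom.le_ncard_successors {a : ℕ} {T : Finset (List ℕ)} {σ τ ρ : List ℕ}
    (h : GoodFrom a T σ) (hρ : ρ ∈ T) (hστ : σ <+: τ) (hτρ : τ <+: ρ) (hne : τ ≠ ρ) :
    a ≤ (successors T τ).ncard :=
  h.2.2 τ ⟨ρ, hρ, hστ, hτρ, hne⟩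

lemma goodFrom_singleton (n : ℕ) (τ : List ℕ) : GoodFrom n {τ} τ := by
  refine ⟨Finset.singleton_nonempty τ, by simp, ?_⟩
  rintro τ' ⟨ρ, hρ, hττ', hτ'ρ, hne⟩
  rw [Finset.mem_singleton] at hρ
  subst hρ
  exact absurd (hτ'ρ.eq_of_length_le hττ'.length_le) hne

lemma GoodFromFor.biUnion {n : ℕ} {τ : List ℕ} {P : Set (List ℕ)} {K : Finset ℕ}
    (hK : K.Nonempty) (hnK : n ≤ K.card) {S : ℕ → Finset (List ℕ)}
    (hS : ∀ k ∈ K, GoodFromFor n (S k) (τ ++ [k]) P) : GoodFromFor n (K.biUnion S) τ P := by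
  refine ⟨⟨hK.biUnion fun k hk => (hS k hk).1.1, ?_, ?_⟩, ?_⟩
  · intro ρ hρ
    obtain ⟨k, hk, hρk⟩ := Finset.mem_biUnion.1 hρ
    exact (List.prefix_append τ [k]).trans ((hS k hk).1.2.1 ρ hρk)
  · rintro τ' ⟨ρ, hρ, hττ', hτ'ρ, hne⟩
    obtain ⟨k, hk, hρk⟩ := Finset.mem_biUnion.1 hρ
    show n ≤ (successors _ τ').ncard
    by_cases hτ' : τ' = τ
    · subst hτ'
      have hKsucc : (K : Set ℕ) ⊆ successors (K.biUnion S) τ' := fun k' hk' => by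
        obtain ⟨ρ', hρ'⟩ := (hS k' hk').1.1
        exact ⟨ρ', Finset.mem_biUnion.2 ⟨k', hk', hρ'⟩, (hS k' hk').1.2.1 ρ' hρ'⟩
      calc n ≤ K.card := hnK
        _ = (K : Set ℕ).ncard := (Set.ncard_coe_finset K).symm
        _ ≤ _ := Set.ncard_le_ncard hKsucc (successors_finite _ _)
    · -- `τ'` lies strictly above `τ`, hence inside the subtree `S k` containing `ρ`.
      have hkτ' : τ ++ [k] <+: τ' := by
        rcases List.prefix_or_prefix_of_prefix hτ'ρ ((hS k hk).1.2.1 ρ hρk) with h | h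
        · rcases List.prefix_concat_iff.1 h with rfl | h
          · exact List.prefix_rfl
          · exact absurd (h.eq_of_length_le hττ'.length_le) hτ'
        · exact h
      exact ((hS k hk).1.le_ncard_successors hρk hkτ' hτ'ρ hne).trans <| Set.ncard_le_ncard
        (successors_mono (Finset.subset_biUnion_of_mem S hk) τ') (successors_finite _ _)
  · intro ρ hρ
    obtain ⟨k, hk, hρk⟩ := Finset.mem_biUnion.1 hρ
    exact (hS k hk).2 hρk

lemma exists_goodFromFor_of_forall_append {n : ℕ} (hn : 1 ≤ n) {T : Finset (List ℕ)}
    {τ : List ℕ} {P : Set (List ℕ)} {K : Finset ℕ} (hnK : n ≤ K.card)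
    (hK : ∀ k ∈ K, ∃ S ⊆ T, GoodFromFor n S (τ ++ [k]) P) :
    ∃ S ⊆ T, GoodFromFor n S τ P := by
  choose! S hST hS using hK
  exact ⟨K.biUnion S, Finset.biUnion_subset.2 hST,
    GoodFromFor.biUnion (Finset.card_pos.1 (hn.trans hnK)) hnK hS⟩

lemma Finset.le_card_filter_or_le_card_filter {α : Type*} {K : Finset α} {n : ℕ}
    (p q : α → Prop) [DecidablePred p] [DecidablePred q] (hpq : ∀ k ∈ K, p k ∨ q k)
    (hK : 2 * n ≤ K.card) : n ≤ (K.filter p).card ∨ n ≤ (K.filter q).card := by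
  have hsub : K.filter (fun k => ¬p k) ⊆ K.filter q := fun k hk => by
    simp only [Finset.mem_filter] at hk ⊢
    exact ⟨hk.1, (hpq k hk.1).resolve_left hk.2⟩
  have := Finset.card_filter_add_card_filter_not (s := K) p
  have := Finset.card_le_card hsub
  omega

lemma exists_goodFromFor_of_mem {n : ℕ} {T : Finset (List ℕ)} {P Q : Set (List ℕ)}
    (hcov : ↑T ⊆ P ∪ Q) {τ : List ℕ} (hτ : τ ∈ T) :
    (∃ S ⊆ T, GoodFromFor n S τ P) ∨ (∃ S ⊆ T, GoodFromFor n S τ Q) := by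
  have hsub : {τ} ⊆ T := Finset.singleton_subset_iff.2 hτ
  rcases hcov hτ with h | h
  · exact .inl ⟨{τ}, hsub, goodFrom_singleton n τ, by simpa using h⟩
  · exact .inr ⟨{τ}, hsub, goodFrom_singleton n τ, by simpa using h⟩

lemma exists_goodFromFor_of_subset_union_of_height {n : ℕ} (hn : 1 ≤ n)
    {T : Finset (List ℕ)} {α : List ℕ} (hgood : GoodFrom (2 * n) T α)
    {P Q : Set (List ℕ)} (hcov : ↑T ⊆ P ∪ Q) (m : ℕ) {τ : List ℕ}
    (hm : T.sup List.length ≤ τ.length + m) (hατ : α <+: τ)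
    {ρ : List ℕ} (hρ : ρ ∈ T) (hτρ : τ <+: ρ) :
    (∃ S ⊆ T, GoodFromFor n S τ P) ∨ (∃ S ⊆ T, GoodFromFor n S τ Q) := by
  by_cases hτ : τ ∈ T
  · exact exists_goodFromFor_of_mem hcov hτ
  have hne : τ ≠ ρ := fun h => hτ (h ▸ hρ)
  induction m generalizing τ ρ with
  | zero =>
    exact absurd (hτρ.eq_of_length_le ((T.le_sup hρ).trans hm)) hne
  | succ m ih =>
    classical
    set K := (successors_finite T τ).toFinset
    have hK : 2 * n ≤ K.card := by
      rw [← Set.ncard_eq_toFinset_card _ (successors_finite T τ)]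
      exact hgood.le_ncard_successors hρ hατ hτρ hne
    have hchild : ∀ k ∈ K, (∃ S ⊆ T, GoodFromFor n S (τ ++ [k]) P) ∨
        (∃ S ⊆ T, GoodFromFor n S (τ ++ [k]) Q) := by
      intro k hk
      obtain ⟨ρ', hρ', hkρ'⟩ := (Set.Finite.mem_toFinset _).1 hk
      by_cases hk' : τ ++ [k] ∈ T
      · exact exists_goodFromFor_of_mem hcov hk'
      have hm' : T.sup List.length ≤ (τ ++ [k]).length + m := by
        rw [List.length_append, List.length_singleton]; omega
      exact ih hm' (hατ.trans (List.prefix_append τ [k])) hρ' hkρ' hk' fun h => hk' (h ▸ hρ')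
    rcases Finset.le_card_filter_or_le_card_filter _ _ hchild hK with hP | hQ
    · exact .inl <| exists_goodFromFor_of_forall_append hn hP fun k hk => (Finset.mem_filter.1 hk).2
    · exact .inr <| exists_goodFromFor_of_forall_append hn hQ fun k hk => (Finset.mem_filter.1 hk).2

lemma exists_goodFromFor_of_subset_union {n : ℕ} (hn : 1 ≤ n) {T : Finset (List ℕ)}
    {α : List ℕ} (hgood : GoodFrom (2 * n) T α) {P Q : Set (List ℕ)} (hcov : ↑T ⊆ P ∪ Q) :
    (∃ S ⊆ T, GoodFromFor n S α P) ∨ (∃ S ⊆ T, GoodFromFor n S α Q) :=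
  let ⟨ρ, hρ⟩ := hgood.1
  exists_goodFromFor_of_subset_union_of_height hn hgood hcov _ (Nat.le_add_left _ _)
    List.prefix_rfl hρ (hgood.2.1 ρ hρ)

lemma exists_goodFromFor_of_subset_iUnion {n : ℕ} (hn : 1 ≤ n) (a : ℕ)
    {T : Finset (List ℕ)} {α : List ℕ} (hgood : GoodFrom (2 ^ a * n) T α)
    (P : Fin (a + 1) → Set (List ℕ)) (hcov : ↑T ⊆ ⋃ i, P i) :
    ∃ i, ∃ S ⊆ T, GoodFromFor n S α (P i) := by
  induction a generalizing T with
  | zero => exact ⟨0, T, subset_rfl, by simpa using hgood,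
    by simpa [Set.iUnion_fin_add_one_eq_iUnion_succ] using hcov⟩
  | succ a ih =>
    rw [Set.iUnion_fin_add_one_eq_iUnion_succ] at hcov
    rw [pow_succ', mul_assoc] at hgood
    rcases exists_goodFromFor_of_subset_union (Nat.mul_pos (by positivity) hn) hgood hcov with
      ⟨S, hST, hS, hSP⟩ | ⟨S, hST, hS, hSP⟩
    · exact ⟨0, S, hST, hS.mono (Nat.le_mul_of_pos_left n (by positivity)), hSP⟩
    · obtain ⟨i, S', hS'S, hS'⟩ := ih hS (P ∘ Fin.succ) hSP
      exact ⟨i.succ, S', hS'S.trans hST, hS'⟩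

theorem good_subset_of_cover_general (a n : ℕ) (ha : 1 ≤ a) (hn : 1 ≤ n)
    (T : Finset (List ℕ)) (α : List ℕ)
    (hgood : GoodFrom (2 ^ (a - 1) * n) T α)
    (P : Fin a → Set (List ℕ)) (hcov : ↑T ⊆ ⋃ i, P i) :
    ∃ i : Fin a, ∃ S ⊆ T, GoodFromFor n S α (P i) := by
  obtain ⟨a, rfl⟩ := Nat.exists_eq_add_of_le' ha
  exact exists_goodFromFor_of_subset_iUnion hn a (by simpa using hgood) P hcov

/-- If `T` is `2^(a−1)·n`-good from `α` and `T ⊆ P_1 ∪ ⋯ ∪ P_a`, then for some `i`,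
`T` has a subset which is `n`-good from `α` for `P_i`. -/
theorem good_subset_of_cover (a n : ℕ) (ha : 1 ≤ a) (hn : 1 ≤ n)
    (T : Finset (List ℕ)) (hT : IsTree T) (α : List ℕ)
    (hgood : GoodFrom (2 ^ (a - 1) * n) T α)
    (P : Fin a → Set (List ℕ)) (hcov : ↑T ⊆ ⋃ i, P i) :
    ∃ i : Fin a, ∃ S ⊆ T, GoodFromFor n S α (P i) :=
  good_subset_of_cover_general a n ha hn T α hgood P hcov
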